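/- arXiv:1807.04429 — 2 statements merged into one kernel-verified Lean document; each statement's English description precedes it below -/
import Mathlib

section
/- Fix s ≥ 1 and r ∈ (0, s). There exists a constant c_{r,s} > 0 depending only on r and s such that for any symmetric matrix A ∈ R^{p×p}, the weak-ℓ_s quasi-norm of the diagonal of A satisfies ‖diag(A)‖_{wℓ_s} ≤ c_{r,s} ‖λ(A)‖_{wℓ_r}, where λ(A) is the vector of eigenvalues of A. -/
open Finset Real

lemma diag_rpow_sum_le {p : ℕ} (A : Matrix (Fin p) (Fin p) ℝ) (hA : A.IsHermitian)
    {s : ℝ} (hs : 1 ≤ s) :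
    ∑ i, |A i i| ^ s ≤ ∑ k, |hA.eigenvalues k| ^ s := by
  set U : Matrix (Fin p) (Fin p) ℝ := (hA.eigenvectorUnitary : Matrix (Fin p) (Fin p) ℝ) with hU
  have hAdiag : ∀ i, A i i = ∑ k, (U i k) ^ 2 * hA.eigenvalues k := by
    intro i
    conv_lhs => rw [hA.spectral_theorem]
    simp [Matrix.mul_apply, Matrix.diagonal_apply, Matrix.star_apply, Finset.sum_ite_eq,
      mul_comm, mul_assoc, mul_left_comm, sq, ← hU]
  have hrow : ∀ i, ∑ k, (U i k) ^ 2 = 1 := by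
    intro i
    have h1 : U * star U = 1 := Matrix.mem_unitaryGroup_iff.mp hA.eigenvectorUnitary.2
    have := congrFun (congrFun h1 i) i
    simpa [Matrix.mul_apply, Matrix.star_apply, Matrix.one_apply, sq] using this
  have hcol : ∀ k, ∑ i, (U i k) ^ 2 = 1 := by
    intro k
    have h1 : star U * U = 1 := Matrix.mem_unitaryGroup_iff'.mp hA.eigenvectorUnitary.2
    have := congrFun (congrFun h1 k) k
    simpa [Matrix.mul_apply, Matrix.star_apply, Matrix.one_apply, sq] using this
  have key : ∀ i, |A i i| ^ s ≤ ∑ k, (U i k) ^ 2 * |hA.eigenvalues k| ^ s := by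
    intro i
    have h1 : |A i i| ≤ ∑ k, (U i k) ^ 2 * |hA.eigenvalues k| := by
      rw [hAdiag i]
      refine (Finset.abs_sum_le_sum_abs _ _).trans (le_of_eq ?_)
      refine Finset.sum_congr rfl fun k _ => ?_
      rw [abs_mul, abs_of_nonneg (sq_nonneg _)]
    have h2 := Real.rpow_arith_mean_le_arith_mean_rpow Finset.univ
      (fun k => (U i k) ^ 2) (fun k => |hA.eigenvalues k|)
      (fun k _ => sq_nonneg _) (hrow i) (fun k _ => abs_nonneg _) hs
    calc |A i i| ^ s ≤ (∑ k, (U i k) ^ 2 * |hA.eigenvalues k|) ^ s :=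
          Real.rpow_le_rpow (abs_nonneg _) h1 (by linarith)
      _ ≤ _ := h2
  calc ∑ i, |A i i| ^ s ≤ ∑ i, ∑ k, (U i k) ^ 2 * |hA.eigenvalues k| ^ s :=
        Finset.sum_le_sum fun i _ => key i
    _ = ∑ k, (∑ i, (U i k) ^ 2) * |hA.eigenvalues k| ^ s := by
        rw [Finset.sum_comm]
        exact Finset.sum_congr rfl fun k _ => (Finset.sum_mul _ _ _).symm
    _ = ∑ k, |hA.eigenvalues k| ^ s := by
        exact Finset.sum_congr rfl fun k _ => by rw [hcol k, one_mul]


/-- `w` is an antitone (decreasing) rearrangement of the absolute values of the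
entries of `v`, i.e. `w j = |v|_{(j+1)}`. -/
def IsAntitoneAbsRearrangement {p : ℕ} (v w : Fin p → ℝ) : Prop :=
  ∃ σ : Equiv.Perm (Fin p), (∀ j, w j = |v (σ j)|) ∧ Antitone w

/-- For fixed `s ≥ 1` and `0 < r < s` there is a constant `c = c_{r,s} > 0` such that for
every symmetric matrix `A`, `‖diag(A)‖_{wℓ_s} ≤ c ‖λ(A)‖_{wℓ_r}`.  Here `wd` is the
decreasing rearrangement of the absolute diagonal entries, `wl` that of the absolute
eigenvalues, and `W` is any upper bound for (in particular the value of) the weak-ℓ_r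
quasi-norm of the eigenvalue vector. -/
theorem weak_ls_diag_le_weak_lr_eigenvalues (s r : ℝ) (hs : 1 ≤ s) (hr : 0 < r) (hrs : r < s) :
    ∃ c : ℝ, 0 < c ∧
      ∀ (p : ℕ) (A : Matrix (Fin p) (Fin p) ℝ) (hA : A.IsHermitian)
        (wd wl : Fin p → ℝ),
        IsAntitoneAbsRearrangement (fun i => A i i) wd →
        IsAntitoneAbsRearrangement hA.eigenvalues wl →
        ∀ W : ℝ, (∀ j : Fin p, ((j : ℝ) + 1) ^ (1 / r) * wl j ≤ W) →
        ∀ j : Fin p, ((j : ℝ) + 1) ^ (1 / s) * wd j ≤ c * W := by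
  have hs0 : (0:ℝ) < s := lt_of_lt_of_le one_pos hs
  have hsr1 : 1 < s / r := (one_lt_div hr).mpr hrs
  set C : ℝ := ∑' n : ℕ, ((n : ℝ) + 1) ^ (-(s / r)) with hCdef
  have hsum : Summable (fun n : ℕ => ((n : ℝ) + 1) ^ (-(s / r))) := by
    have h0 : Summable (fun n : ℕ => ((n : ℝ)) ^ (-(s / r))) :=
      Real.summable_nat_rpow.mpr (by linarith)
    have := (summable_nat_add_iff 1).mpr h0
    refine this.congr fun n => ?_
    push_cast
    ring_nf
  have hC1 : (1:ℝ) ≤ C := by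
    have h := Summable.le_tsum hsum 0 (fun i _ => Real.rpow_nonneg (by positivity) _)
    simpa using h
  have hC0 : (0:ℝ) < C := lt_of_lt_of_le one_pos hC1
  refine ⟨C ^ (1 / s), by positivity, ?_⟩
  rintro p A hA wd wl ⟨σd, hσd, hwd⟩ ⟨σl, hσl, hwl⟩ W hW j
  have hwd0 : ∀ i, 0 ≤ wd i := fun i => (hσd i).symm ▸ abs_nonneg _
  have hwl0 : ∀ i, 0 ≤ wl i := fun i => (hσl i).symm ▸ abs_nonneg _
  have hW0 : 0 ≤ W := le_trans (mul_nonneg (Real.rpow_nonneg (by positivity) _) (hwl0 j)) (hW j)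
  -- step A : Schur
  have schur : ∑ i, |A i i| ^ s ≤ ∑ k, |hA.eigenvalues k| ^ s :=
    diag_rpow_sum_le A hA hs
  -- step B : rearrangements
  have hd_sum : ∑ i, wd i ^ s = ∑ i, |A i i| ^ s := by
    rw [← Equiv.sum_comp σd (fun i => |A i i| ^ s)]
    exact Finset.sum_congr rfl fun i _ => by rw [hσd i]
  have hl_sum : ∑ k, |hA.eigenvalues k| ^ s = ∑ k, wl k ^ s := by
    rw [← Equiv.sum_comp σl (fun k => |hA.eigenvalues k| ^ s)]
    exact (Finset.sum_congr rfl fun k _ => by rw [hσl k]).symm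
  -- step C : eigenvalue sum bound
  have hterm : ∀ k : Fin p, wl k ^ s ≤ W ^ s * ((k : ℝ) + 1) ^ (-(s / r)) := by
    intro k
    have hk0 : (0:ℝ) < (k : ℝ) + 1 := by positivity
    have h1 : wl k ≤ W * ((k : ℝ) + 1) ^ (-(1 / r)) := by
      rw [Real.rpow_neg hk0.le, ← div_eq_mul_inv,
        le_div_iff₀ (Real.rpow_pos_of_pos hk0 _), mul_comm]
      exact hW k
    calc wl k ^ s ≤ (W * ((k : ℝ) + 1) ^ (-(1 / r))) ^ s :=
          Real.rpow_le_rpow (hwl0 k) h1 hs0.le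
      _ = W ^ s * ((k : ℝ) + 1) ^ (-(s / r)) := by
          rw [Real.mul_rpow hW0 (Real.rpow_nonneg hk0.le _), ← Real.rpow_mul hk0.le]
          congr 1
          field_simp
  have hlsum : ∑ k, wl k ^ s ≤ W ^ s * C := by
    calc ∑ k : Fin p, wl k ^ s ≤ ∑ k : Fin p, W ^ s * ((k : ℝ) + 1) ^ (-(s / r)) :=
          Finset.sum_le_sum fun k _ => hterm k
      _ = W ^ s * ∑ k : Fin p, ((k : ℝ) + 1) ^ (-(s / r)) := by rw [Finset.mul_sum]
      _ ≤ W ^ s * C := by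
          refine mul_le_mul_of_nonneg_left ?_ (Real.rpow_nonneg hW0 _)
          rw [Fin.sum_univ_eq_sum_range (fun k => ((k : ℝ) + 1) ^ (-(s / r)))]
          exact Summable.sum_le_tsum _ (fun i _ => Real.rpow_nonneg (by positivity) _) hsum
  -- step D : weak-ℓs from ℓs for wd
  have hdj : ((j : ℝ) + 1) * wd j ^ s ≤ ∑ i, wd i ^ s := by
    have hcard : (Finset.Iic j).card = (j : ℕ) + 1 := Fin.card_Iic j
    have h1 : ∀ i ∈ Finset.Iic j, wd j ^ s ≤ wd i ^ s := fun i hi =>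
      Real.rpow_le_rpow (hwd0 j) (hwd (Finset.mem_Iic.mp hi)) hs0.le
    have h2 := Finset.card_nsmul_le_sum (Finset.Iic j) (fun i => wd i ^ s) (wd j ^ s) h1
    rw [hcard, nsmul_eq_mul] at h2
    push_cast at h2
    refine le_trans (by linarith) (Finset.sum_le_sum_of_subset_of_nonneg
      (Finset.subset_univ _) (fun i _ _ => Real.rpow_nonneg (hwd0 i) _))
  -- combine
  have main : ((j : ℝ) + 1) * wd j ^ s ≤ C * W ^ s := by
    calc ((j : ℝ) + 1) * wd j ^ s ≤ ∑ i, wd i ^ s := hdj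
      _ = ∑ i, |A i i| ^ s := hd_sum
      _ ≤ ∑ k, |hA.eigenvalues k| ^ s := schur
      _ = ∑ k, wl k ^ s := hl_sum
      _ ≤ W ^ s * C := hlsum
      _ = C * W ^ s := mul_comm _ _
  -- conclude via rpow with exponent 1/s
  have hj0 : (0:ℝ) < (j : ℝ) + 1 := by positivity
  have lhs_pow : (((j : ℝ) + 1) ^ (1 / s) * wd j) ^ s = ((j : ℝ) + 1) * wd j ^ s := by
    rw [Real.mul_rpow (Real.rpow_nonneg hj0.le _) (hwd0 j), ← Real.rpow_mul hj0.le,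
      one_div_mul_cancel hs0.ne', Real.rpow_one]
  have rhs_pow : (C ^ (1 / s) * W) ^ s = C * W ^ s := by
    rw [Real.mul_rpow (Real.rpow_nonneg hC0.le _) hW0, ← Real.rpow_mul hC0.le,
      one_div_mul_cancel hs0.ne', Real.rpow_one]
  have hfin : (((j : ℝ) + 1) ^ (1 / s) * wd j) ^ s ≤ (C ^ (1 / s) * W) ^ s := by
    rw [lhs_pow, rhs_pow]; exact main
  have hL0 : 0 ≤ ((j : ℝ) + 1) ^ (1 / s) * wd j :=
    mul_nonneg (Real.rpow_nonneg hj0.le _) (hwd0 j)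
  have hR0 : 0 ≤ C ^ (1 / s) * W := mul_nonneg (Real.rpow_nonneg hC0.le _) hW0
  have := Real.rpow_le_rpow (lhs_pow ▸ mul_nonneg hj0.le (Real.rpow_nonneg (hwd0 j) _))
    hfin (le_of_lt (by positivity : (0:ℝ) < 1/s))
  rwa [← Real.rpow_mul hL0, ← Real.rpow_mul hR0,
    mul_one_div_cancel hs0.ne', Real.rpow_one, Real.rpow_one] at this
end

section
/- If A ∈ R^{p×p} is symmetric and there exists c₀ > 0 and r ∈ (0,s) with s ≥ 1 such that the j-th largest eigenvalue satisfies λ_j(A) ≤ c₀ j^{-1/r} for all 1 ≤ j ≤ p, and A is positive semidefinite, then the sorted diagonal entries satisfy A_{(j)(j)} ≤ c₀ c_{r,s} j^{-1/s} for all 1 ≤ j ≤ p, where c_{r,s} = ζ(s/r)^{1/s} depends only on r and s. -/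
/-- If a positive semidefinite symmetric matrix `A` has ordered eigenvalues
`λ_{(j)} ≤ c₀ j^{-1/r}`, then its sorted diagonal entries satisfy
`A_{(j)(j)} ≤ c₀ c_{r,s} j^{-1/s}` with `c_{r,s} = ζ(s/r)^{1/s}`.
`wl` is the decreasing rearrangement of the eigenvalues and `wd` that of the
diagonal entries. -/
theorem diag_decay_of_eigenvalue_decay {p : ℕ} (s r c0 : ℝ)
    (hs : 1 ≤ s) (hr : 0 < r) (hrs : r < s) (hc0 : 0 < c0)
    (A : Matrix (Fin p) (Fin p) ℝ) (hA : A.IsHermitian) (hpsd : A.PosSemidef)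
    (wl : Fin p → ℝ)
    (hwl : ∃ σ : Equiv.Perm (Fin p), (∀ j, wl j = hA.eigenvalues (σ j)) ∧ Antitone wl)
    (hdecay : ∀ j : Fin p, wl j ≤ c0 * ((j : ℝ) + 1) ^ (-(1 / r)))
    (wd : Fin p → ℝ)
    (hwd : ∃ σ : Equiv.Perm (Fin p), (∀ j, wd j = A (σ j) (σ j)) ∧ Antitone wd) :
    ∀ j : Fin p,
      wd j ≤ c0 * (∑' n : ℕ, ((n : ℝ) + 1) ^ (-(s / r))) ^ (1 / s) * ((j : ℝ) + 1) ^ (-(1 / s)) := by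
  obtain ⟨σl, hσl, hwl_anti⟩ := hwl
  obtain ⟨σd, hσd, hwd_anti⟩ := hwd
  have hs0 : (0 : ℝ) < s := lt_of_lt_of_le one_pos hs
  have hq1 : 1 < s / r := (one_lt_div hr).mpr hrs
  -- summability of the zeta-type series
  have hsum : Summable (fun n : ℕ => ((n : ℝ) + 1) ^ (-(s / r))) := by
    have h := Real.summable_nat_rpow.mpr (by linarith : -(s / r) < -1)
    have h2 := (summable_nat_add_iff 1).mpr h
    convert h2 using 2 with n
    · rfl
    push_cast
    ring_nf
  set Z : ℝ := ∑' n : ℕ, ((n : ℝ) + 1) ^ (-(s / r)) with hZdef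
  have hZ1 : (1 : ℝ) ≤ Z := by
    have := Summable.le_tsum hsum 0 (fun n _ => by positivity)
    simpa using this
  have hZ0 : (0 : ℝ) < Z := lt_of_lt_of_le one_pos hZ1
  -- eigenvalues are nonnegative
  have hev : ∀ k, 0 ≤ hA.eigenvalues k := hpsd.eigenvalues_nonneg
  -- diagonal entries nonneg
  have hdnn : ∀ i, 0 ≤ A i i := fun i => by
    have := hpsd.diag_nonneg (i := i)
    simpa using this
  have hwdnn : ∀ i, 0 ≤ wd i := fun i => by rw [hσd]; exact hdnn _
  have hwlnn : ∀ i, 0 ≤ wl i := fun i => by rw [hσl]; exact hev _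
  set U : Matrix (Fin p) (Fin p) ℝ := (hA.eigenvectorUnitary : Matrix (Fin p) (Fin p) ℝ) with hU
  have hUmem := hA.eigenvectorUnitary.2
  rw [Unitary.mem_iff] at hUmem
  -- diagonal formula
  have hdiag : ∀ i, A i i = ∑ k, hA.eigenvalues k * (U i k) ^ 2 := by
    intro i
    conv_lhs => rw [hA.spectral_theorem]
    simp [hU, Matrix.mul_apply, Matrix.diagonal_apply, Function.comp, ite_mul, mul_ite,
      Finset.sum_ite_eq, Finset.sum_ite_eq']
    exact Finset.sum_congr rfl (fun k _ => by ring_nf)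
  -- rows sum to one
  have hrow : ∀ i, ∑ k, (U i k) ^ 2 = 1 := by
    intro i
    have h2 := congrFun (congrFun (congrArg
      (fun M => (M : Matrix (Fin p) (Fin p) ℝ)) hUmem.2) i) i
    simpa [hU, Matrix.mul_apply, Matrix.one_apply, pow_two] using h2
  -- columns sum to one
  have hcol : ∀ k, ∑ i, (U i k) ^ 2 = 1 := by
    intro k
    have h2 := congrFun (congrFun (congrArg
      (fun M => (M : Matrix (Fin p) (Fin p) ℝ)) hUmem.1) k) k
    simpa [hU, Matrix.mul_apply, Matrix.one_apply, pow_two] using h2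
  -- Jensen : (A i i)^s ≤ ∑ k w k λ_k^s
  have hjensen : ∀ i, (A i i) ^ s ≤ ∑ k, (U i k) ^ 2 * (hA.eigenvalues k) ^ s := by
    intro i
    rw [hdiag i]
    have := Real.rpow_arith_mean_le_arith_mean_rpow Finset.univ
      (fun k => (U i k) ^ 2) (fun k => hA.eigenvalues k)
      (fun k _ => by positivity) (hrow i) (fun k _ => hev k) hs
    convert this using 2 with k
    · exact Finset.sum_congr rfl (fun k _ => by ring_nf)
  -- sum of diagonal powers bounded by sum of eigenvalue powers
  have hmaj : ∑ i, (A i i) ^ s ≤ ∑ k, (hA.eigenvalues k) ^ s := by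
    calc ∑ i, (A i i) ^ s ≤ ∑ i, ∑ k, (U i k) ^ 2 * (hA.eigenvalues k) ^ s :=
          Finset.sum_le_sum (fun i _ => hjensen i)
      _ = ∑ k, (∑ i, (U i k) ^ 2) * (hA.eigenvalues k) ^ s := by
          rw [Finset.sum_comm]
          exact Finset.sum_congr rfl (fun k _ => by rw [Finset.sum_mul])
      _ = ∑ k, (hA.eigenvalues k) ^ s := by
          exact Finset.sum_congr rfl (fun k _ => by rw [hcol k, one_mul])
  -- eigenvalue powers bounded
  have hev_bound : ∑ k, (hA.eigenvalues k) ^ s ≤ c0 ^ s * Z := by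
    have h1 : ∑ k, (hA.eigenvalues k) ^ s = ∑ k, (wl k) ^ s := by
      rw [← Equiv.sum_comp σl (fun k => (hA.eigenvalues k) ^ s)]
      exact Finset.sum_congr rfl (fun k _ => by rw [hσl])
    have h2 : ∀ k : Fin p, (wl k) ^ s ≤ c0 ^ s * ((k : ℝ) + 1) ^ (-(s / r)) := by
      intro k
      have hk1 : (0 : ℝ) < (k : ℝ) + 1 := by positivity
      have := Real.rpow_le_rpow (hwlnn k) (hdecay k) hs0.le
      calc (wl k) ^ s ≤ (c0 * ((k : ℝ) + 1) ^ (-(1 / r))) ^ s := this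
        _ = c0 ^ s * (((k : ℝ) + 1) ^ (-(1 / r))) ^ s :=
            Real.mul_rpow hc0.le (by positivity)
        _ = c0 ^ s * ((k : ℝ) + 1) ^ (-(s / r)) := by
            rw [← Real.rpow_mul hk1.le]
            congr 1
            ring_nf
    have h3 : ∑ k : Fin p, c0 ^ s * ((k : ℝ) + 1) ^ (-(s / r)) ≤ c0 ^ s * Z := by
      rw [← Finset.mul_sum]
      refine mul_le_mul_of_nonneg_left ?_ (by positivity)
      calc ∑ k : Fin p, ((k : ℝ) + 1) ^ (-(s / r))
          = ∑ n ∈ Finset.range p, ((n : ℝ) + 1) ^ (-(s / r)) :=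
            (Fin.sum_univ_eq_sum_range (fun n => ((n : ℝ) + 1) ^ (-(s / r))) p)
        _ ≤ Z := Summable.sum_le_tsum (Finset.range p) (fun n _ => by positivity) hsum
    exact h1 ▸ le_trans (Finset.sum_le_sum (fun k _ => h2 k)) h3
  intro j
  -- counting step
  have hcount : ((j : ℝ) + 1) * (wd j) ^ s ≤ c0 ^ s * Z := by
    have hIic : ((j : ℝ) + 1) * (wd j) ^ s = ∑ _i ∈ Finset.Iic j, (wd j) ^ s := by
      rw [Finset.sum_const, Fin.card_Iic, nsmul_eq_mul]
      push_cast
      ring_nf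
    calc ((j : ℝ) + 1) * (wd j) ^ s
        = ∑ _i ∈ Finset.Iic j, (wd j) ^ s := hIic
      _ ≤ ∑ i ∈ Finset.Iic j, (wd i) ^ s :=
          Finset.sum_le_sum (fun i hi =>
            Real.rpow_le_rpow (hwdnn j) (hwd_anti (Finset.mem_Iic.mp hi)) hs0.le)
      _ ≤ ∑ i, (wd i) ^ s :=
          Finset.sum_le_sum_of_subset_of_nonneg (Finset.subset_univ _)
            (fun i _ _ => Real.rpow_nonneg (hwdnn i) s)
      _ = ∑ i, (A i i) ^ s := by
          rw [← Equiv.sum_comp σd (fun i => (A i i) ^ s)]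
          exact Finset.sum_congr rfl (fun i _ => by rw [hσd])
      _ ≤ ∑ k, (hA.eigenvalues k) ^ s := hmaj
      _ ≤ c0 ^ s * Z := hev_bound
  -- invert the power
  have hj1 : (0 : ℝ) < (j : ℝ) + 1 := by positivity
  have hkey : (wd j) ^ s ≤ c0 ^ s * Z * ((j : ℝ) + 1)⁻¹ := by
    rw [mul_comm ((j : ℝ) + 1) _] at hcount
    rw [← le_div_iff₀ hj1] at hcount
    rwa [div_eq_mul_inv] at hcount
  have hRHS : (c0 * Z ^ (1 / s) * ((j : ℝ) + 1) ^ (-(1 / s))) ^ s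
      = c0 ^ s * Z * ((j : ℝ) + 1)⁻¹ := by
    rw [Real.mul_rpow (by positivity) (by positivity),
        Real.mul_rpow hc0.le (by positivity),
        ← Real.rpow_mul hZ0.le, ← Real.rpow_mul hj1.le,
        one_div_mul_cancel hs0.ne', Real.rpow_one]
    congr 1
    rw [neg_mul, one_div_mul_cancel hs0.ne', Real.rpow_neg_one]
  exact (Real.rpow_le_rpow_iff (hwdnn j)
    (show (0:ℝ) ≤ c0 * Z ^ (1 / s) * ((j : ℝ) + 1) ^ (-(1 / s)) by positivity) hs0).mp
    (by rw [hRHS]; exact hkey)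
end
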